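/- arXiv:2001.06385 — 4 statements merged into one kernel-verified Lean document; each statement's English description precedes it below -/
import Mathlib

section
/- Let G = [[0,1,5],[1,10,32],[5,32,82]] viewed as a ℤ-linear map ℤ³ → ℤ³. The cokernel ℤ³ ⧸ range(G) is a cyclic group of order 12, i.e. it is isomorphic to ℤ/12ℤ. -/
private def fG2 : (Fin 3 → ℤ) →ₗ[ℤ] ZMod 12 where
  toFun x := ((6 * x 0 + 5 * x 1 + 11 * x 2 : ℤ) : ZMod 12)
  map_add' x y := by simp [Pi.add_apply]; ring
  map_smul' c x := by simp [Pi.smul_apply, zsmul_eq_mul]; ring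

/-- The discriminant group of the lattice with Gram matrix
`[[0,1,5],[1,10,32],[5,32,82]]` is cyclic of order `12`: the cokernel of the
associated linear map `ℤ³ → ℤ³` is isomorphic to `ℤ/12ℤ`. -/
theorem gram_G2dagger_cokernel :
    Nonempty
      (((Fin 3 → ℤ) ⧸ LinearMap.range
          (Matrix.mulVecLin (!![0, 1, 5; 1, 10, 32; 5, 32, 82] : Matrix (Fin 3) (Fin 3) ℤ)))
        ≃+ ZMod 12) := by
  have hker : LinearMap.range
      (Matrix.mulVecLin (!![0, 1, 5; 1, 10, 32; 5, 32, 82] : Matrix (Fin 3) (Fin 3) ℤ))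
      = LinearMap.ker fG2 := by
    ext x
    constructor
    · rintro ⟨y, rfl⟩
      simp only [LinearMap.mem_ker, fG2, LinearMap.coe_mk, AddHom.coe_mk]
      simp [Matrix.mulVecLin_apply, Matrix.mulVec, dotProduct, Fin.sum_univ_three]
      have h12 : (12 : ZMod 12) = 0 := by decide
      linear_combination (5 * (y 0 : ZMod 12) + 34 * (y 1 : ZMod 12) + 91 * (y 2 : ZMod 12)) * h12
    · intro hx
      simp only [LinearMap.mem_ker, fG2, LinearMap.coe_mk, AddHom.coe_mk] at hx
      rw [ZMod.intCast_zmod_eq_zero_iff_dvd] at hx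
      obtain ⟨k, hk⟩ := hx
      refine ⟨![20 * x 0 - 4 * x 1 + 7 * x 2 - 6 * k,
                -3 * x 0 + 5 * x 1 + 6 * x 2 - 7 * k,
                2 * x 0 + x 2 - k], ?_⟩
      funext i
      fin_cases i <;>
        simp [Matrix.mulVecLin_apply, Matrix.mulVec, dotProduct, Fin.sum_univ_three] <;>
        push_cast at hk <;> linarith [hk]
  have hsurj : Function.Surjective fG2 := by
    intro c
    refine ⟨![0, 5 * (c.val : ℤ), 0], ?_⟩
    show ((6 * (0:ℤ) + 5 * (5 * (c.val : ℤ)) + 11 * 0 : ℤ) : ZMod 12) = c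
    push_cast
    rw [ZMod.natCast_val, ZMod.cast_id]
    ring_nf
    rw [show (25 : ZMod 12) = 1 by decide, mul_one]
  exact ⟨((Submodule.quotEquivOfEq _ _ hker).trans
    (fG2.quotKerEquivOfSurjective hsurj)).toAddEquiv⟩
end

section
/- Consider the bilinear form B(x,y) = xᵀGy on ℤ³, where G = [[0,1,5],[1,10,32],[5,32,82]], and set u = (18,−5,1). For vectors a, b ∈ ℤ³, the conditions B(a,a) = 0, B(b,b) = 0, B(a,b) = 1, B(a,u) = 0 and B(b,u) = 0 hold if and only if the (ordered) pair (a,b) is one of: ((1,0,0),(−5,1,0)), ((−5,1,0),(1,0,0)), ((−1,0,0),(5,−1,0)), ((5,−1,0),(−1,0,0)). -/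
/-!
With `e = (1,0,0)` and `f = (-5,1,0)` one has `B(e,e) = B(f,f) = 0`, `B(e,f) = 1`,
`B(e,u) = B(f,u) = 0` and `B(u,u) = 12`; since `(e, f, u)` is a basis of `ℤ³`, the lattice
is `U ⊕ ⟨12⟩`. The conditions `B(a,u) = B(b,u) = 0` put `a` and `b` in the hyperbolic plane
`U = ℤe ⊕ ℤf`, where an isotropic vector is a multiple of `e` or of `f`; pairing to `1` then
forces `(a,b) = ±(e,f)` or `±(f,e)`.
-/

open Matrix

/-- The Gram matrix of `H⁶_alg(M,ℤ)` in the basis `(Π, L²ξ, Lξ²)`. -/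
def gramG2 : Matrix (Fin 3) (Fin 3) ℤ := !![0, 1, 5; 1, 10, 32; 5, 32, 82]

/-- The bilinear form `B(x,y) = xᵀ G y` on `ℤ³` given by the Gram matrix. -/
def bG2 (x y : Fin 3 → ℤ) : ℤ := x ⬝ᵥ gramG2.mulVec y

/-- The coordinate vector of `θ(L) = j_*q^*L`. -/
def uG2 : Fin 3 → ℤ := ![18, -5, 1]

theorem eq_of_isotropic_pair_hyperbolic {R : Type*} [CommRing R] [NoZeroDivisors R]
    {p q p' q' : R} (h : p * q = 0) (h' : p' * q' = 0) (h1 : p * q' + q * p' = 1) :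
    ∃ c : Rˣ, (p = c ∧ q = 0 ∧ p' = 0 ∧ q' = ↑c⁻¹) ∨ (p = 0 ∧ q = c ∧ p' = ↑c⁻¹ ∧ q' = 0) := by
  rcases mul_eq_zero.mp h with rfl | rfl
  · have hqp' : q * p' = 1 := by simpa using h1
    have hq' : q' = 0 := by linear_combination q * h' - q' * hqp'
    refine ⟨Units.mkOfMulEqOne q p' hqp', Or.inr ⟨rfl, rfl, ?_, hq'⟩⟩
    exact (Units.inv_eq_of_mul_eq_one_right hqp').symm
  · have hpq' : p * q' = 1 := by simpa using h1
    have hp' : p' = 0 := by linear_combination p * h' - p' * hpq'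
    refine ⟨Units.mkOfMulEqOne p q' hpq', Or.inl ⟨rfl, rfl, hp', ?_⟩⟩
    exact (Units.inv_eq_of_mul_eq_one_right hpq').symm

namespace G2dagger

-- The coordinates along `e` and `f` in the basis `(e, f, u)` of `ℤ³`.
def coordE (x : Fin 3 → ℤ) : ℤ := x 0 + 5 * x 1 + 7 * x 2

def coordF (x : Fin 3 → ℤ) : ℤ := x 1 + 5 * x 2

theorem eq_coords (x : Fin 3 → ℤ) :
    x = ![coordE x - 5 * coordF x + 18 * x 2, coordF x - 5 * x 2, x 2] := by
  ext i; fin_cases i <;> simp [coordE, coordF]; ring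

theorem bG2_eq_coords (x y : Fin 3 → ℤ) :
    bG2 x y = coordE x * coordF y + coordF x * coordE y + 12 * (x 2 * y 2) := by
  simp only [bG2, gramG2, coordE, coordF, dotProduct, mulVec, Fin.sum_univ_three, of_apply,
    cons_val]
  ring

theorem bG2_uG2 (x : Fin 3 → ℤ) : bG2 x uG2 = 12 * x 2 := by
  simp [bG2_eq_coords, coordE, coordF, uG2]

end G2dagger

open G2dagger in
/-- Determination of the images of the generators of `H⁰(Y,ℤ)` and `H⁴(Y,ℤ)` under
the Hodge isometry `θ`: the pairs `(a,b)` with `B(a,a) = B(b,b) = 0`, `B(a,b) = 1`,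
`B(a,u) = B(b,u) = 0` are exactly the four listed ones. -/
theorem mukai_generators_G2dagger (a b : Fin 3 → ℤ) :
    (bG2 a a = 0 ∧ bG2 b b = 0 ∧ bG2 a b = 1 ∧ bG2 a uG2 = 0 ∧ bG2 b uG2 = 0) ↔
      ((a = ![1, 0, 0] ∧ b = ![-5, 1, 0]) ∨
       (a = ![-5, 1, 0] ∧ b = ![1, 0, 0]) ∨
       (a = ![-1, 0, 0] ∧ b = ![5, -1, 0]) ∨
       (a = ![5, -1, 0] ∧ b = ![-1, 0, 0])) := by
  constructor
  · rintro ⟨haa, hbb, hab, hau, hbu⟩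
    have ha2 : a 2 = 0 := by simpa [bG2_uG2] using hau
    have hb2 : b 2 = 0 := by simpa [bG2_uG2] using hbu
    simp only [bG2_eq_coords, ha2, hb2] at haa hbb hab
    obtain ⟨c, h | h⟩ := eq_of_isotropic_pair_hyperbolic (by linarith) (by linarith)
      (by linarith : coordE a * coordF b + coordF a * coordE b = 1)
    all_goals
      rw [eq_coords a, eq_coords b, ha2, hb2]
      rcases Int.units_eq_one_or c with rfl | rfl <;> simp [h]
  · rintro (⟨rfl, rfl⟩ | ⟨rfl, rfl⟩ | ⟨rfl, rfl⟩ | ⟨rfl, rfl⟩) <;> decide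
end

section
/- Let G' = [[0,0,0,1,6],[0,0,1,6,22],[0,1,0,6,22],[1,6,6,44,126],[6,22,22,126,308]] viewed as a ℤ-linear map ℤ⁵ → ℤ⁵. The cokernel ℤ⁵ ⧸ range(G') is a cyclic group of order 12, i.e. it is isomorphic to ℤ/12ℤ. -/
/-- The auxiliary linear functional `v ↦ 6v₀+2v₁+2v₂+6v₃+v₄ mod 12`. -/
def gramD4phi : (Fin 5 → ℤ) →ₗ[ℤ] ZMod 12 where
  toFun v := ((6 * v 0 + 2 * v 1 + 2 * v 2 + 6 * v 3 + v 4 : ℤ) : ZMod 12)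
  map_add' a b := by
    simp only [Pi.add_apply]
    push_cast
    ring
  map_smul' c v := by
    simp only [Pi.smul_apply, smul_eq_mul, RingHom.id_apply, zsmul_eq_mul]
    push_cast
    ring

/-- The discriminant group of the rank-5 lattice of the roof of type `D₄` is cyclic
of order `12`: the cokernel of the Gram matrix as a map `ℤ⁵ → ℤ⁵` is `ℤ/12ℤ`. -/
theorem gram_D4_cokernel :
    Nonempty
      (((Fin 5 → ℤ) ⧸ LinearMap.range
          (Matrix.mulVecLin
            (!![0, 0, 0, 1, 6;
                0, 0, 1, 6, 22;
                0, 1, 0, 6, 22;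
                1, 6, 6, 44, 126;
                6, 22, 22, 126, 308] : Matrix (Fin 5) (Fin 5) ℤ)))
        ≃+ ZMod 12) := by
  set G : Matrix (Fin 5) (Fin 5) ℤ :=
    !![0, 0, 0, 1, 6;
       0, 0, 1, 6, 22;
       0, 1, 0, 6, 22;
       1, 6, 6, 44, 126;
       6, 22, 22, 126, 308] with hG
  have hker : LinearMap.range (Matrix.mulVecLin G) = LinearMap.ker gramD4phi := by
    apply le_antisymm
    · rintro v ⟨u, rfl⟩
      have hmv : ∀ i, (G.mulVecLin u) i = G.mulVec u i := fun i => rfl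
      simp only [LinearMap.mem_ker, gramD4phi, LinearMap.coe_mk, AddHom.coe_mk]
      have h0 : G.mulVecLin u 0 = u 3 + 6 * u 4 := by
        simp [hG, Matrix.mulVecLin_apply, Matrix.mulVec, dotProduct,
          Fin.sum_univ_five]
      have h1 : G.mulVecLin u 1 = u 2 + 6 * u 3 + 22 * u 4 := by
        simp [hG, Matrix.mulVecLin_apply, Matrix.mulVec, dotProduct,
          Fin.sum_univ_five]
      have h2 : G.mulVecLin u 2 = u 1 + 6 * u 3 + 22 * u 4 := by
        simp [hG, Matrix.mulVecLin_apply, Matrix.mulVec, dotProduct,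
          Fin.sum_univ_five]
      have h3 : G.mulVecLin u 3 = u 0 + 6 * u 1 + 6 * u 2 + 44 * u 3 + 126 * u 4 := by
        simp [hG, Matrix.mulVecLin_apply, Matrix.mulVec, dotProduct,
          Fin.sum_univ_five]
      have h4 : G.mulVecLin u 4 = 6 * u 0 + 22 * u 1 + 22 * u 2 + 126 * u 3 + 308 * u 4 := by
        simp [hG, Matrix.mulVecLin_apply, Matrix.mulVec, dotProduct,
          Fin.sum_univ_five]
      rw [h0, h1, h2, h3, h4]
      have : (6 * (u 3 + 6 * u 4) + 2 * (u 2 + 6 * u 3 + 22 * u 4)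
          + 2 * (u 1 + 6 * u 3 + 22 * u 4)
          + 6 * (u 0 + 6 * u 1 + 6 * u 2 + 44 * u 3 + 126 * u 4)
          + (6 * u 0 + 22 * u 1 + 22 * u 2 + 126 * u 3 + 308 * u 4) : ℤ)
          = 12 * (u 0 + 5 * u 1 + 5 * u 2 + 35 * u 3 + 99 * u 4) := by ring
      rw [this, ZMod.intCast_zmod_eq_zero_iff_dvd]
      exact dvd_mul_of_dvd_left (by norm_num) _
    · intro v hv
      simp only [LinearMap.mem_ker, gramD4phi, LinearMap.coe_mk, AddHom.coe_mk] at hv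
      rw [ZMod.intCast_zmod_eq_zero_iff_dvd] at hv
      obtain ⟨k, hk⟩ := hv
      refine ⟨![6 * k - 50 * v 0 + 28 * v 1 + 28 * v 2 - 17 * v 3 + 2 * v 4,
        10 * k + 24 * v 0 - 18 * v 1 - 17 * v 2 + 2 * v 3 - 2 * v 4,
        10 * k + 24 * v 0 - 17 * v 1 - 18 * v 2 + 2 * v 3 - 2 * v 4,
        6 * k - 17 * v 0 + 6 * v 1 + 6 * v 2 - 6 * v 3,
        11 * k - 3 * v 0 - 3 * v 1 - 3 * v 2 - 5 * v 3 - v 4], ?_⟩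
      funext i
      fin_cases i <;>
        simp [hG, Matrix.mulVecLin_apply, Matrix.mulVec, dotProduct,
          Fin.sum_univ_five] <;>
        push_cast at hk <;> linarith
  have hsurj : Function.Surjective gramD4phi := by
    intro z
    obtain ⟨x, hx⟩ := ZMod.intCast_surjective (n := 12) z
    exact ⟨![0, 0, 0, 0, x], by
      simp only [gramD4phi, LinearMap.coe_mk, AddHom.coe_mk]
      simpa using hx⟩
  exact ⟨((Submodule.quotEquivOfEq _ _ hker).trans
    (gramD4phi.quotKerEquivOfSurjective hsurj)).toAddEquiv⟩
end

section
/- Consider the bilinear form B(x,y) = xᵀG'y on ℤ⁵, where G' = [[0,0,0,1,6],[0,0,1,6,22],[0,1,0,6,22],[1,6,6,44,126],[6,22,22,126,308]], with standard basis vectors e₁,…,e₅. A vector x ∈ ℤ⁵ satisfies B(x,e₁) = B(x,e₂) = B(x,e₃) = B(x,e₄) = 0 and has coprime coordinates (gcd of the five coordinates equal to 1) if and only if x = (−30,14,14,−6,1) or x = (30,−14,−14,6,−1). Moreover, for u = (−30,14,14,−6,1) one has B(u,u) = −12. -/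
/-!
The four conditions `B(x, eᵢ) = 0` form a triangular system expressing `x₀, …, x₃` in terms
of `x₄`, so its integer solutions are the multiples `k • u` of `u = (-30, 14, 14, -6, 1)`.
The content (gcd of the coordinates) of `k • u` is `|k|` times that of `u`, which is `1`
because `u₄ = 1`; so primitivity forces `k = ±1`.
-/

open Matrix

/-- The Gram matrix of `H⁸_alg(M,ℤ)` in the basis `(Π₁L, Π₁ξ, Π₂ξ, L²ξ², Lξ³)`. -/
def gramD4 : Matrix (Fin 5) (Fin 5) ℤ :=
  !![0, 0, 0, 1, 6;
     0, 0, 1, 6, 22;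
     0, 1, 0, 6, 22;
     1, 6, 6, 44, 126;
     6, 22, 22, 126, 308]

/-- The bilinear form `B(x,y) = xᵀ G' y` on `ℤ⁵` given by the Gram matrix. -/
def bD4 (x y : Fin 5 → ℤ) : ℤ := x ⬝ᵥ gramD4.mulVec y

theorem bD4_e₁ (x : Fin 5 → ℤ) : bD4 x ![1, 0, 0, 0, 0] = x 3 + x 4 * 6 := by
  simp [bD4, gramD4, dotProduct, mulVec, Fin.sum_univ_five]

theorem bD4_e₂ (x : Fin 5 → ℤ) : bD4 x ![0, 1, 0, 0, 0] = x 2 + x 3 * 6 + x 4 * 22 := by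
  simp [bD4, gramD4, dotProduct, mulVec, Fin.sum_univ_five]

theorem bD4_e₃ (x : Fin 5 → ℤ) : bD4 x ![0, 0, 1, 0, 0] = x 1 + x 3 * 6 + x 4 * 22 := by
  simp [bD4, gramD4, dotProduct, mulVec, Fin.sum_univ_five]

theorem bD4_e₄ (x : Fin 5 → ℤ) :
    bD4 x ![0, 0, 0, 1, 0] = x 0 + x 1 * 6 + x 2 * 6 + x 3 * 44 + x 4 * 126 := by
  simp [bD4, gramD4, dotProduct, mulVec, Fin.sum_univ_five]

theorem bD4_orthogonal_e₁₂₃₄_iff (x : Fin 5 → ℤ) :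
    (bD4 x ![1, 0, 0, 0, 0] = 0 ∧ bD4 x ![0, 1, 0, 0, 0] = 0 ∧
        bD4 x ![0, 0, 1, 0, 0] = 0 ∧ bD4 x ![0, 0, 0, 1, 0] = 0) ↔
      ∃ k : ℤ, x = k • ![-30, 14, 14, -6, 1] := by
  rw [bD4_e₁, bD4_e₂, bD4_e₃, bD4_e₄]
  constructor
  · rintro ⟨h₁, h₂, h₃, h₄⟩
    refine ⟨x 4, funext fun i => ?_⟩
    fin_cases i <;>
      simp only [Fin.zero_eta, Fin.mk_one, Fin.reduceFinMk, Pi.smul_apply, smul_eq_mul,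
        cons_val_zero, cons_val_one, cons_val] <;> omega
  · rintro ⟨k, rfl⟩
    simp only [Pi.smul_apply, smul_eq_mul, cons_val]
    omega

theorem Int.gcd_mul_natCast_natAbs_mul (k a : ℤ) (n : ℕ) :
    Int.gcd (k * a) ↑(k.natAbs * n) = k.natAbs * Int.gcd a n := by
  rw [Nat.cast_mul, Int.natCast_natAbs]
  rcases abs_choice k with h | h <;> rw [h]
  · exact Int.gcd_mul_left k a n
  · rw [neg_mul, Int.gcd_neg, Int.gcd_mul_left]

def content5 (v : Fin 5 → ℤ) : ℕ :=
  Int.gcd (v 0) (Int.gcd (v 1) (Int.gcd (v 2) (Int.gcd (v 3) (v 4))))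

theorem content5_smul (k : ℤ) (v : Fin 5 → ℤ) : content5 (k • v) = k.natAbs * content5 v := by
  simp only [content5, Pi.smul_apply, smul_eq_mul, Int.gcd_mul_left,
    Int.gcd_mul_natCast_natAbs_mul]

/-- A vector `x ∈ ℤ⁵` orthogonal to `e₁, e₂, e₃, e₄` with coprime coordinates is
exactly `±(-30,14,14,-6,1)`; moreover `u = (-30,14,14,-6,1)` satisfies `B(u,u) = -12`. -/
theorem pushforward_polarization_D4 :
    (∀ x : Fin 5 → ℤ,
      (bD4 x ![1, 0, 0, 0, 0] = 0 ∧ bD4 x ![0, 1, 0, 0, 0] = 0 ∧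
        bD4 x ![0, 0, 1, 0, 0] = 0 ∧ bD4 x ![0, 0, 0, 1, 0] = 0 ∧
        Int.gcd (x 0) (Int.gcd (x 1) (Int.gcd (x 2) (Int.gcd (x 3) (x 4)))) = 1) ↔
        (x = ![-30, 14, 14, -6, 1] ∨ x = ![30, -14, -14, 6, -1])) ∧
    bD4 ![-30, 14, 14, -6, 1] ![-30, 14, 14, -6, 1] = -12 := by
  refine ⟨fun x => ⟨?_, ?_⟩, by decide⟩
  · rintro ⟨h₁, h₂, h₃, h₄, hx⟩
    obtain ⟨k, rfl⟩ := (bD4_orthogonal_e₁₂₃₄_iff x).1 ⟨h₁, h₂, h₃, h₄⟩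
    have hk : k.natAbs = 1 := by
      have hu : content5 ![-30, 14, 14, -6, 1] = 1 := by decide
      rwa [← mul_one k.natAbs, ← hu, ← content5_smul]
    rcases Int.natAbs_eq_iff.1 hk with rfl | rfl
    · exact .inl (one_smul ℤ _)
    · exact .inr (by decide)
  · rintro (rfl | rfl) <;> decide
end
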